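/- arXiv:dg-ga/9711006 — 5 statements merged into one kernel-verified Lean document; each statement's English description precedes it below -/
import Mathlib

section
/- Let m be a positive integer, let α_1,…,α_m be positive integers, β_1,…,β_m and γ_1,…,γ_m be integers, and let ℓ be a real number. Set G(n) = −∑_{i=1}^{m} {(γ_i − n β_i)/α_i} for n ∈ ℤ and F(n) = G(n) − G(−n). Then for every complex number s with Re(s) > 2, ∑_{n=1}^{∞} (−2nℓ + F(n))/n^s = −2ℓ·ζ(s−1) + ∑_{i=1}^{m} (1/α_i^s) ∑_{r=1}^{α_i − 1} ( {(γ_i + r β_i)/α_i} − {(γ_i − r β_i)/α_i} ) · ζ(s, r/α_i), where ζ(s) is the Riemann zeta function and ζ(s,a) the Hurwitz zeta function. -/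
/-- The Hurwitz zeta function as a Dirichlet-type series, valid for `1 < re s` and `a > 0`:
`ζ(s, a) = ∑_{n=0}^∞ (n + a)⁻ˢ`. -/
noncomputable def hurwitzZetaSeries (s : ℂ) (a : ℝ) : ℂ :=
  ∑' n : ℕ, 1 / ((n : ℂ) + (a : ℂ)) ^ s

open Complex Finset

/-- bounded numerator summability, base `n`. -/
lemma summable_aux {c : ℕ → ℂ} {C : ℝ} (hc : ∀ n, ‖c n‖ ≤ C) {s : ℂ} (hs : 1 < s.re) :
    Summable fun n : ℕ => c n / (n : ℂ) ^ s := by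
  have h1 : Summable fun n : ℕ => ‖((n : ℂ) ^ s)⁻¹‖ := by
    simpa [one_div] using (Complex.summable_one_div_nat_cpow.mpr hs).norm
  refine Summable.of_norm (Summable.of_nonneg_of_le (fun n => norm_nonneg _)
    (fun n => ?_) (h1.mul_left C))
  rw [div_eq_mul_inv, norm_mul]
  exact mul_le_mul_of_nonneg_right (hc n) (norm_nonneg _)

/-- bounded numerator summability, base `n+1`. -/
lemma summable_aux' {c : ℕ → ℂ} {C : ℝ} (hc : ∀ n, ‖c n‖ ≤ C) {s : ℂ} (hs : 1 < s.re) :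
    Summable fun n : ℕ => c n / ((n : ℂ) + 1) ^ s := by
  have h := (summable_aux (c := fun k => c (k - 1)) (fun n => hc _) hs).comp_injective
    (i := fun n : ℕ => n + 1) (add_left_injective 1)
  refine h.congr fun n => ?_
  simp [Function.comp]

lemma summable_hurwitz {a : ℝ} (ha : 0 < a) (ha1 : a ≤ 1) {s : ℂ} (hs : 1 < s.re) :
    Summable fun n : ℕ => 1 / ((n : ℂ) + (a : ℂ)) ^ s := by
  have hσ : (0:ℝ) < s.re := by linarith
  refine Summable.of_norm (Summable.of_nonneg_of_le (fun n => norm_nonneg _) (fun n => ?_)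
    ((((Real.summable_one_div_nat_rpow.mpr hs).comp_injective
      (i := fun n : ℕ => n + 1) (add_left_injective 1)).mul_left (a ^ (-s.re))).congr
        (fun n => rfl)))
  have hpos : (0:ℝ) < (n : ℝ) + a := by positivity
  have h1 : ((n : ℂ) + (a : ℂ)) = (((n : ℝ) + a : ℝ) : ℂ) := by push_cast; ring
  rw [norm_div, norm_one, h1, Complex.norm_cpow_eq_rpow_re_of_pos hpos]
  simp only [Function.comp_apply, one_div, ← Real.rpow_neg hpos.le, Nat.cast_add, Nat.cast_one,
    ← Real.rpow_neg (by positivity : (0:ℝ) ≤ (n:ℝ) + 1)]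
  rw [← Real.mul_rpow ha.le (by positivity)]
  exact Real.rpow_le_rpow_of_nonpos (by positivity) (by nlinarith) (by linarith)

lemma per_index (α : ℕ) (hα : 0 < α) (β γ : ℤ) {s : ℂ} (hs : 1 < s.re) :
    ∑' n : ℕ, ((Int.fract (((γ:ℝ) + ((n:ℝ)+1) * (β:ℝ)) / (α:ℝ)) -
        Int.fract (((γ:ℝ) - ((n:ℝ)+1) * (β:ℝ)) / (α:ℝ)) : ℝ) : ℂ) / ((n : ℂ) + 1) ^ s =
      (1 / (α : ℂ) ^ s) * ∑ r ∈ Finset.Icc 1 (α - 1),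
        ((Int.fract (((γ:ℝ) + (r:ℝ) * (β:ℝ)) / (α:ℝ)) -
          Int.fract (((γ:ℝ) - (r:ℝ) * (β:ℝ)) / (α:ℝ)) : ℝ) : ℂ) *
          hurwitzZetaSeries s ((r:ℝ) / (α:ℝ)) := by
  haveI : NeZero α := ⟨hα.ne'⟩
  have hα' : (α:ℝ) ≠ 0 := Nat.cast_ne_zero.mpr hα.ne'
  set f : ℕ → ℝ := fun n => Int.fract (((γ:ℝ) + (n:ℝ) * (β:ℝ)) / (α:ℝ)) -
      Int.fract (((γ:ℝ) - (n:ℝ) * (β:ℝ)) / (α:ℝ)) with hf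
  have hf0 : f 0 = 0 := by simp [hf]
  have hfper : ∀ q r : ℕ, f (q * α + r) = f r := by
    intro q r
    have e1 : ((γ:ℝ) + ((q * α + r : ℕ):ℝ) * (β:ℝ)) / (α:ℝ)
        = ((γ:ℝ) + (r:ℝ) * (β:ℝ)) / (α:ℝ) + ((q * β : ℤ):ℝ) := by
      push_cast; field_simp; ring
    have e2 : ((γ:ℝ) - ((q * α + r : ℕ):ℝ) * (β:ℝ)) / (α:ℝ)
        = ((γ:ℝ) - (r:ℝ) * (β:ℝ)) / (α:ℝ) + ((-(q * β) : ℤ):ℝ) := by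
      push_cast; field_simp; ring
    simp only [hf, e1, e2, Int.fract_add_intCast]
  set h : ℕ → ℂ := fun n => ((f n : ℝ) : ℂ) / (n : ℂ) ^ s with hh
  have hsum : Summable h := by
    refine summable_aux (C := 2) (fun n => ?_) hs
    rw [Complex.norm_real, Real.norm_eq_abs]
    have h1 := Int.fract_nonneg (((γ:ℝ) + (n:ℝ) * (β:ℝ)) / (α:ℝ))
    have h2 := Int.fract_lt_one (((γ:ℝ) + (n:ℝ) * (β:ℝ)) / (α:ℝ))
    have h3 := Int.fract_nonneg (((γ:ℝ) - (n:ℝ) * (β:ℝ)) / (α:ℝ))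
    have h4 := Int.fract_lt_one (((γ:ℝ) - (n:ℝ) * (β:ℝ)) / (α:ℝ))
    rw [abs_le]; constructor <;> simp only [hf] <;> nlinarith
  have hstep : (∑' n : ℕ, ((Int.fract (((γ:ℝ) + ((n:ℝ)+1) * (β:ℝ)) / (α:ℝ)) -
        Int.fract (((γ:ℝ) - ((n:ℝ)+1) * (β:ℝ)) / (α:ℝ)) : ℝ) : ℂ) / ((n : ℂ) + 1) ^ s)
      = ∑' n : ℕ, h (n + 1) := by
    refine tsum_congr fun n => ?_
    simp only [hh, hf]
    push_cast
    ring_nf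
  rw [hstep]
  have hzero : ∑' n : ℕ, h n = h 0 + ∑' n : ℕ, h (n + 1) := Summable.tsum_eq_zero_add hsum
  have hzero' : ∑' n : ℕ, h (n + 1) = ∑' n : ℕ, h n := by
    rw [hzero, hh]; simp [hf0]
  rw [hzero']
  -- decompose via division with remainder
  have e3 : ∑' n : ℕ, h n = ∑' p : ℕ × Fin α, h (p.1 * α + (p.2 : ℕ)) := by
    rw [← ((Nat.divModEquiv α).symm.tsum_eq h)]
    rfl
  have e4 : ∑' p : ℕ × Fin α, h (p.1 * α + (p.2 : ℕ))
      = ∑' p : Fin α × ℕ, h (p.2 * α + (p.1 : ℕ)) := by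
    rw [← ((Equiv.prodComm (Fin α) ℕ).tsum_eq (fun p : ℕ × Fin α => h (p.1 * α + (p.2 : ℕ))))]
    rfl
  have hsum2 : Summable fun p : Fin α × ℕ => h (p.2 * α + (p.1 : ℕ)) := by
    have := ((Nat.divModEquiv α).symm.summable_iff (f := h)).mpr hsum
    have h2 : Summable fun p : ℕ × Fin α => h (p.1 * α + (p.2 : ℕ)) := this
    exact ((Equiv.prodComm (Fin α) ℕ).summable_iff
      (f := fun p : ℕ × Fin α => h (p.1 * α + (p.2 : ℕ)))).mpr h2
  have e5 : ∑' p : Fin α × ℕ, h (p.2 * α + (p.1 : ℕ))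
      = ∑ r : Fin α, ∑' q : ℕ, h (q * α + (r : ℕ)) := by
    rw [Summable.tsum_prod' hsum2 (fun b => hsum2.prod_factor b)]
    exact tsum_fintype _
  -- inner sums
  have inner : ∀ r : ℕ, 1 ≤ r → r < α →
      ∑' q : ℕ, h (q * α + r)
        = ((f r : ℝ) : ℂ) * ((1 / (α : ℂ) ^ s) * hurwitzZetaSeries s ((r:ℝ) / (α:ℝ))) := by
    intro r hr1 hrα
    have hterm : ∀ q : ℕ, h (q * α + r)
        = (((f r : ℝ) : ℂ) * (1 / (α : ℂ) ^ s)) *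
            (1 / ((q : ℂ) + (((r:ℝ) / (α:ℝ) : ℝ) : ℂ)) ^ s) := by
      intro q
      have hαc : ((α : ℕ) : ℂ) ≠ 0 := by exact_mod_cast hα'
      have hb : ((q * α + r : ℕ) : ℂ) = ((α : ℝ) : ℂ) * ((((q:ℝ) + (r:ℝ)/(α:ℝ)) : ℝ) : ℂ) := by
        push_cast
        field_simp
      have hc : (((α : ℝ) : ℂ) * ((((q:ℝ) + (r:ℝ)/(α:ℝ)) : ℝ) : ℂ)) ^ s
          = ((α : ℝ) : ℂ) ^ s * ((((q:ℝ) + (r:ℝ)/(α:ℝ)) : ℝ) : ℂ) ^ s :=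
        mul_cpow_ofReal_nonneg (Nat.cast_nonneg α) (by positivity) s
      have hd : ((((q:ℝ) + (r:ℝ)/(α:ℝ)) : ℝ) : ℂ) = (q : ℂ) + (((r:ℝ)/(α:ℝ) : ℝ) : ℂ) := by
        push_cast; ring
      simp only [hh, hfper q r]
      rw [hb, hc, hd, div_eq_mul_inv, mul_inv]
      push_cast
      ring
    rw [tsum_congr hterm, tsum_mul_left]
    rw [mul_assoc]
    rfl
  have inner0 : ∑' q : ℕ, h (q * α + 0) = 0 := by
    have : ∀ q : ℕ, h (q * α + 0) = 0 := by
      intro q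
      have hz : f (q * α) = 0 := by simpa using (hfper q 0).trans hf0
      simp [hh, hz]
    rw [tsum_congr this, tsum_zero]
  rw [e3, e4, e5]
  rw [Fin.sum_univ_eq_sum_range (fun r => ∑' q : ℕ, h (q * α + r)) α]
  rw [Finset.mul_sum]
  rw [← Finset.sum_subset (s₁ := Finset.Icc 1 (α - 1)) (s₂ := Finset.range α)
    (fun x hx => by
      simp only [Finset.mem_Icc] at hx
      exact Finset.mem_range.mpr (by omega))
    (fun x hx hnx => by
      simp only [Finset.mem_range] at hx
      simp only [Finset.mem_Icc] at hnx
      have : x = 0 := by omega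
      subst this
      exact inner0)]
  refine Finset.sum_congr rfl fun r hr => ?_
  simp only [Finset.mem_Icc] at hr
  rw [inner r hr.1 (by omega)]
  simp only [hf]
  ring

lemma fract_sub_bound (x y : ℝ) : ‖((Int.fract x - Int.fract y : ℝ) : ℂ)‖ ≤ 2 := by
  rw [Complex.norm_real, Real.norm_eq_abs, abs_le]
  have h1 := Int.fract_nonneg x
  have h2 := Int.fract_lt_one x
  have h3 := Int.fract_nonneg y
  have h4 := Int.fract_lt_one y
  constructor <;> nlinarith

/-- The eta-function identity: with `G(n) = -∑ᵢ {(γᵢ - n βᵢ)/αᵢ}` and `F(n) = G(n) - G(-n)`,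
for `Re s > 2`,
`∑_{n=1}^∞ (-2nℓ + F(n))/n^s
  = -2ℓ ζ(s-1) + ∑ᵢ αᵢ⁻ˢ ∑_{r=1}^{αᵢ-1} ({(γᵢ+rβᵢ)/αᵢ} - {(γᵢ-rβᵢ)/αᵢ}) ζ(s, r/αᵢ)`. -/
theorem eta_series_eq
    (m : ℕ) (hm : 0 < m) (α : Fin m → ℕ) (hα : ∀ i, 0 < α i)
    (β γ : Fin m → ℤ) (ℓ : ℝ)
    (G : ℤ → ℝ)
    (hG : ∀ n : ℤ, G n = -∑ i, Int.fract (((γ i : ℝ) - (n : ℝ) * (β i : ℝ)) / (α i : ℝ)))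
    (F : ℤ → ℝ) (hF : ∀ n : ℤ, F n = G n - G (-n))
    (s : ℂ) (hs : 2 < s.re) :
    ∑' n : ℕ, ((-2 * ((n : ℝ) + 1) * ℓ + F ((n : ℤ) + 1) : ℝ) : ℂ) / ((n : ℂ) + 1) ^ s =
      -2 * (ℓ : ℂ) * riemannZeta (s - 1) +
        ∑ i, (1 / (α i : ℂ) ^ s) *
          ∑ r ∈ Finset.Icc 1 (α i - 1),
            ((Int.fract (((γ i : ℝ) + (r : ℝ) * (β i : ℝ)) / (α i : ℝ)) -
              Int.fract (((γ i : ℝ) - (r : ℝ) * (β i : ℝ)) / (α i : ℝ)) : ℝ) : ℂ) *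
              hurwitzZetaSeries s ((r : ℝ) / (α i : ℝ)) := by
  have hs1 : 1 < s.re := by linarith
  have hs2 : 1 < (s - 1).re := by
    rw [Complex.sub_re, Complex.one_re]; linarith
  have hFn : ∀ n : ℕ, F ((n : ℤ) + 1) =
      ∑ i, (Int.fract (((γ i : ℝ) + ((n:ℝ)+1) * (β i : ℝ)) / (α i : ℝ)) -
        Int.fract (((γ i : ℝ) - ((n:ℝ)+1) * (β i : ℝ)) / (α i : ℝ))) := by
    intro n
    rw [hF, hG, hG, neg_sub_neg, ← Finset.sum_sub_distrib]
    refine Finset.sum_congr rfl fun i _ => ?_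
    congr 2
    · congr 1
      push_cast
      ring
    · congr 1
      push_cast
      ring
  have hterm : ∀ n : ℕ,
      ((-2 * ((n : ℝ) + 1) * ℓ + F ((n : ℤ) + 1) : ℝ) : ℂ) / ((n : ℂ) + 1) ^ s
        = (-2 * (ℓ:ℂ)) * (1 / ((n : ℂ) + 1) ^ (s-1)) +
          ∑ i, ((Int.fract (((γ i : ℝ) + ((n:ℝ)+1) * (β i : ℝ)) / (α i : ℝ)) -
            Int.fract (((γ i : ℝ) - ((n:ℝ)+1) * (β i : ℝ)) / (α i : ℝ)) : ℝ) : ℂ) /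
              ((n : ℂ) + 1) ^ s := by
    intro n
    rw [hFn n]
    push_cast
    rw [add_div, Finset.sum_div]
    congr 1
    have hne : (n:ℂ) + 1 ≠ 0 := Nat.cast_add_one_ne_zero n
    have hX : ((n:ℂ)+1) ^ (s-1) ≠ 0 := by
      intro hc
      exact hne ((cpow_eq_zero_iff _ _).mp hc).1
    have hpow : ((n:ℂ)+1) ^ s = ((n:ℂ)+1) ^ (s-1) * ((n:ℂ)+1) := by
      conv_lhs => rw [show s = (s-1) + 1 by ring]
      rw [cpow_add _ _ hne, cpow_one]
    rw [hpow]
    field_simp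
  rw [tsum_congr hterm]
  have S2 : Summable fun n : ℕ => (-2 * (ℓ:ℂ)) * (1 / ((n : ℂ) + 1) ^ (s-1)) := by
    refine (summable_aux' (c := fun _ => -2 * (ℓ:ℂ)) (C := ‖-2 * (ℓ:ℂ)‖)
      (fun n => le_refl _) hs2).congr fun n => ?_
    rw [mul_one_div, div_eq_mul_inv]
  have S1 : ∀ i : Fin m, Summable fun n : ℕ =>
      ((Int.fract (((γ i : ℝ) + ((n:ℝ)+1) * (β i : ℝ)) / (α i : ℝ)) -
        Int.fract (((γ i : ℝ) - ((n:ℝ)+1) * (β i : ℝ)) / (α i : ℝ)) : ℝ) : ℂ) /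
          ((n : ℂ) + 1) ^ s := by
    intro i
    exact summable_aux' (C := 2) (fun n => fract_sub_bound _ _) hs1
  rw [Summable.tsum_add S2 (summable_sum fun i _ => S1 i)]
  congr 1
  · rw [tsum_mul_left, ← zeta_eq_tsum_one_div_nat_add_one_cpow hs2]
  · rw [Summable.tsum_finsetSum (fun i _ => S1 i)]
    refine Finset.sum_congr rfl fun i _ => ?_
    exact per_index (α i) (hα i) (β i) (γ i) hs1
end

section
/- Let α be a positive integer, β an integer with gcd(α,β) = 1, and γ an integer. Define D(γ) = ∑_{r=1}^{α} ( {(γ + rβ)/α} − {(γ − rβ)/α} ) · ((r/α)). Then D(γ) = D(α − 1 − γ). (This is the combinatorial identity expressing that the eta invariant satisfies the Serre-duality symmetry η_L(0) = η_{K−L}(0).) -/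
/-!
The identity holds term by term: since `{(α - 1 - m)/α} = 1 - 1/α - {m/α}` for every integer `m`,
replacing `γ` by `α - 1 - γ` swaps the two fractional parts in each summand up to the common
constant `1 - 1/α`, so their difference is unchanged.
-/

/-- The sawtooth function `((x))`: equal to `{x} - 1/2` for `x ∉ ℤ` and to `0` for `x ∈ ℤ`. -/
noncomputable def sawtooth (x : ℝ) : ℝ :=
  if Int.fract x = 0 then 0 else Int.fract x - 1 / 2

lemma Int.sub_one_sub_emod (n : ℕ) (hn : 0 < n) (m : ℤ) :
    ((n : ℤ) - 1 - m) % n = n - 1 - m % n := by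
  have h0 : 0 ≤ m % n := Int.emod_nonneg m (by omega)
  have h1 : m % n < n := Int.emod_lt_of_pos m (by omega)
  conv_rhs => rw [← Int.emod_eq_of_lt (a := n - 1 - m % n) (b := n) (by omega) (by omega)]
  exact ((Int.mod_modEq m n).sub_left _).symm

lemma Int.fract_sub_one_sub_div (n : ℕ) (hn : 0 < n) (m : ℤ) :
    Int.fract (((n : ℝ) - 1 - m) / n) = 1 - 1 / n - Int.fract ((m : ℝ) / n) := by
  rw [show (n : ℝ) - 1 - m = (((n : ℤ) - 1 - m : ℤ) : ℝ) by push_cast; ring,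
    Int.fract_div_intCast_eq_div_intCast_mod, Int.fract_div_intCast_eq_div_intCast_mod,
    Int.sub_one_sub_emod n hn]
  push_cast
  field_simp

lemma Int.fract_add_div_sub_fract_sub_div_reflect (n : ℕ) (hn : 0 < n) (c u : ℤ) :
    Int.fract (((((n : ℤ) - 1 - c : ℤ) : ℝ) + u) / n) -
        Int.fract (((((n : ℤ) - 1 - c : ℤ) : ℝ) - u) / n) =
      Int.fract (((c : ℝ) + u) / n) - Int.fract (((c : ℝ) - u) / n) := by
  have reflect_add : (((n : ℤ) - 1 - c : ℤ) : ℝ) + u = n - 1 - ((c - u : ℤ) : ℝ) := by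
    push_cast; ring
  have reflect_sub : (((n : ℤ) - 1 - c : ℤ) : ℝ) - u = n - 1 - ((c + u : ℤ) : ℝ) := by
    push_cast; ring
  rw [reflect_add, reflect_sub, Int.fract_sub_one_sub_div n hn, Int.fract_sub_one_sub_div n hn]
  push_cast
  ring

theorem serre_duality_symmetry_general
    (α : ℕ) (hα : 0 < α) (β : ℤ) (γ : ℤ)
    (D : ℤ → ℝ)
    (hD : ∀ c : ℤ, D c = ∑ r ∈ Finset.Icc 1 α,
      (Int.fract (((c : ℝ) + (r : ℝ) * (β : ℝ)) / (α : ℝ)) -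
        Int.fract (((c : ℝ) - (r : ℝ) * (β : ℝ)) / (α : ℝ))) * sawtooth ((r : ℝ) / (α : ℝ))) :
    D γ = D ((α : ℤ) - 1 - γ) := by
  rw [hD, hD]
  refine Finset.sum_congr rfl fun r _ => ?_
  have hrβ : (r : ℝ) * β = ((r * β : ℤ) : ℝ) := by push_cast; rfl
  rw [hrβ, Int.fract_add_div_sub_fract_sub_div_reflect α hα]

/-- Serre-duality symmetry of the eta invariant: with
`D(γ) = ∑_{r=1}^{α} ({(γ+rβ)/α} - {(γ-rβ)/α}) ((r/α))` one has `D(γ) = D(α - 1 - γ)`. -/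
theorem serre_duality_symmetry
    (α : ℕ) (hα : 0 < α) (β : ℤ) (hcop : Int.gcd (α : ℤ) β = 1) (γ : ℤ)
    (D : ℤ → ℝ)
    (hD : ∀ c : ℤ, D c = ∑ r ∈ Finset.Icc 1 α,
      (Int.fract (((c : ℝ) + (r : ℝ) * (β : ℝ)) / (α : ℝ)) -
        Int.fract (((c : ℝ) - (r : ℝ) * (β : ℝ)) / (α : ℝ))) * sawtooth ((r : ℝ) / (α : ℝ))) :
    D γ = D ((α : ℤ) - 1 - γ) :=
  serre_duality_symmetry_general α hα β γ D hD
end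

section
/- Let α be a positive integer, β and γ integers, and ρ ∈ (0,1). Then ∑_{k=0}^{α−1} (((γ − kβ)/α)) · (1 − 2{(k+ρ)/α}) = 2·s(β, α; (γ + βρ)/α, −ρ). -/
/-- The Dedekind–Rademacher sum `s(β, α; x, y) = ∑_{r=1}^α ((x + β(r+y)/α)) (((r+y)/α))`. -/
noncomputable def drSum (b : ℤ) (a : ℕ) (x y : ℝ) : ℝ :=
  ∑ r ∈ Finset.Icc 1 a,
    sawtooth (x + (b : ℝ) * (((r : ℝ) + y) / (a : ℝ))) * sawtooth (((r : ℝ) + y) / (a : ℝ))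

/-!
Substituting `r = α - k` matches the `k`-th term on the left with the `r`-th term of the
Dedekind–Rademacher sum. The first sawtooth factors agree because their arguments differ by the
integer `β`. Since `(k + ρ)/α ∈ (0,1)` is never an integer, `1 - 2{(k+ρ)/α} = 2 ((-(k+ρ)/α))`
by oddness of the sawtooth, which is `2 (((α - k - ρ)/α))` by periodicity.
-/

open Finset

lemma sawtooth_add_int (x : ℝ) (n : ℤ) : sawtooth (x + n) = sawtooth x := by
  simp only [sawtooth, Int.fract_add_intCast]

lemma sawtooth_neg (x : ℝ) : sawtooth (-x) = -sawtooth x := by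
  by_cases hx : Int.fract x = 0
  · simp [sawtooth, hx, Int.fract_neg_eq_zero]
  · have hx' : Int.fract (-x) ≠ 0 := by rwa [Ne, Int.fract_neg_eq_zero]
    unfold sawtooth
    rw [if_neg hx, if_neg hx', Int.fract_neg hx]
    ring

lemma one_sub_two_mul_fract_eq_two_mul_sawtooth_neg {x : ℝ} (hx : Int.fract x ≠ 0) :
    1 - 2 * Int.fract x = 2 * sawtooth (-x) := by
  rw [sawtooth_neg, sawtooth, if_neg hx]
  ring

lemma Finset.sum_Icc_one_eq_sum_range_sub {M : Type*} [AddCommMonoid M] (f : ℕ → M) (n : ℕ) :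
    ∑ r ∈ Icc 1 n, f r = ∑ k ∈ range n, f (n - k) := by
  refine sum_nbij' (n - ·) (n - ·) ?_ ?_ ?_ ?_ ?_ <;> grind

theorem sawtooth_sum_eq_two_drSum_general
    (α : ℕ) (β γ : ℤ) (ρ : ℝ) (hρ : ρ ∈ Set.Ioo (0 : ℝ) 1) :
    ∑ k ∈ Finset.range α,
        sawtooth (((γ : ℝ) - (k : ℝ) * (β : ℝ)) / (α : ℝ)) *
          (1 - 2 * Int.fract (((k : ℝ) + ρ) / (α : ℝ))) =
      2 * drSum β α (((γ : ℝ) + (β : ℝ) * ρ) / (α : ℝ)) (-ρ) := by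
  obtain ⟨hρ0, hρ1⟩ := hρ
  rw [drSum, mul_sum, sum_Icc_one_eq_sum_range_sub]
  refine sum_congr rfl fun k hk => ?_
  have hkα : (k : ℝ) + 1 ≤ α := by exact_mod_cast mem_range.mp hk
  have hα : (0 : ℝ) < α := by linarith [k.cast_nonneg (α := ℝ)]
  have hcast : ((α - k : ℕ) : ℝ) = α - k := Nat.cast_sub (mem_range.mp hk).le
  have hfract : Int.fract (((k : ℝ) + ρ) / α) ≠ 0 := by
    rw [Int.fract_eq_self.mpr ⟨by positivity, by rw [div_lt_one hα]; linarith⟩]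
    positivity
  have hfirst : ((γ : ℝ) + β * ρ) / α + β * ((((α - k : ℕ) : ℝ) + -ρ) / α) =
      ((γ : ℝ) - k * β) / α + β := by
    rw [hcast]; field_simp; ring
  have hsecond : sawtooth ((((α - k : ℕ) : ℝ) + -ρ) / α) = sawtooth (-(((k : ℝ) + ρ) / α)) := by
    rw [← sawtooth_add_int (-(((k : ℝ) + ρ) / α)) 1, hcast]
    congr 1; push_cast; field_simp; ring
  rw [hfirst, sawtooth_add_int, hsecond, one_sub_two_mul_fract_eq_two_mul_sawtooth_neg hfract]
  ring

/-- For `ρ ∈ (0,1)`: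
`∑_{k=0}^{α-1} (((γ - kβ)/α)) (1 - 2{(k+ρ)/α}) = 2 s(β, α; (γ+βρ)/α, -ρ)`. -/
theorem sawtooth_sum_eq_two_drSum
    (α : ℕ) (hα : 0 < α) (β γ : ℤ) (ρ : ℝ) (hρ : ρ ∈ Set.Ioo (0 : ℝ) 1) :
    ∑ k ∈ Finset.range α,
        sawtooth (((γ : ℝ) - (k : ℝ) * (β : ℝ)) / (α : ℝ)) *
          (1 - 2 * Int.fract (((k : ℝ) + ρ) / (α : ℝ))) =
      2 * drSum β α (((γ : ℝ) + (β : ℝ) * ρ) / (α : ℝ)) (-ρ) :=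
  sawtooth_sum_eq_two_drSum_general α β γ ρ hρ
end

section
/- Let α and β be coprime positive integers, and let x and y be integers. Then s(β, α; x, y) + s(α, β; y, x) = −1/4 + (α² + β² + 1)/(12αβ). (Dedekind–Rademacher reciprocity law, integer case.) -/
open Finset

lemma sawtooth_int_add (m : ℤ) (u : ℝ) : sawtooth (m + u) = sawtooth u := by
  unfold sawtooth
  rw [Int.fract_intCast_add]

lemma sawtooth_add_int_s10 (u : ℝ) (m : ℤ) : sawtooth (u + m) = sawtooth u := by
  rw [add_comm]; exact sawtooth_int_add m u

lemma floor_nat_div (m n : ℕ) : ⌊(m:ℝ)/(n:ℝ)⌋ = ((m/n : ℕ) : ℤ) := by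
  rw [show ((m:ℝ)/(n:ℝ)) = (((m:ℚ)/(n:ℚ) : ℚ) : ℝ) by push_cast; ring, Rat.floor_cast]
  rw [show ((m:ℚ)) = ((m:ℤ):ℚ) by push_cast; ring, Rat.floor_intCast_div_natCast]
  exact (Int.natCast_ediv m n)

/-- Evaluation of the sawtooth at a non-integral rational point `m/n`. -/
lemma sawtooth_eval {m n : ℕ} (hn : 0 < n) (hnd : ¬ (n ∣ m)) :
    sawtooth ((m:ℝ)/(n:ℝ)) = (m:ℝ)/(n:ℝ) - ((m/n : ℕ):ℝ) - 1/2 := by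
  have hn0 : (n:ℝ) ≠ 0 := by positivity
  have hfr : Int.fract ((m:ℝ)/(n:ℝ)) = (m:ℝ)/(n:ℝ) - ((m/n : ℕ):ℝ) := by
    rw [Int.fract, floor_nat_div, Int.cast_natCast]
  have hne : Int.fract ((m:ℝ)/(n:ℝ)) ≠ 0 := by
    rw [hfr]
    intro h0
    have h1 : (m:ℝ) = (n:ℝ) * ((m/n : ℕ):ℝ) := by
      field_simp at h0
      linarith [h0]
    have h2 : (m : ℕ) = n * (m/n) := by exact_mod_cast h1
    exact hnd ⟨m/n, h2⟩
  unfold sawtooth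
  rw [if_neg hne, hfr]

lemma gauss1 (n : ℕ) : (∑ r ∈ Icc 1 n, (r:ℤ)) * 2 = n*(n+1) := by
  induction n with
  | zero => simp
  | succ m ih =>
    rw [Finset.sum_Icc_succ_top (by omega)]
    push_cast; push_cast at ih; ring_nf; ring_nf at ih; linarith

lemma gauss2 (n : ℕ) : (∑ r ∈ Icc 1 n, (r:ℤ)^2) * 6 = n*(n+1)*(2*n+1) := by
  induction n with
  | zero => simp
  | succ m ih =>
    rw [Finset.sum_Icc_succ_top (by omega)]
    push_cast; push_cast at ih; ring_nf; ring_nf at ih; linarith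

lemma odd_sum_int (m : ℕ) : ∑ s ∈ Icc 1 m, (2*(s:ℤ)-1) = (m:ℤ)^2 := by
  induction m with
  | zero => simp
  | succ n ih => rw [Finset.sum_Icc_succ_top (by omega), ih]; push_cast; ring

lemma mod_mem (h k : ℕ) (hcop : Nat.Coprime h k) {r : ℕ} (hr : r ∈ Finset.Icc 1 (k-1)) :
    h * r % k ∈ Finset.Icc 1 (k-1) := by
  simp only [Finset.mem_Icc] at *
  have hk : 1 ≤ k := by omega
  have h1 : h * r % k < k := Nat.mod_lt _ hk
  have h2 : h * r % k ≠ 0 := by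
    intro h0
    have hd : k ∣ h * r := Nat.dvd_of_mod_eq_zero h0
    have : k ∣ r := (Nat.Coprime.dvd_of_dvd_mul_left (Nat.Coprime.symm hcop)) hd
    have := Nat.le_of_dvd (by omega) this
    omega
  omega

lemma mod_injOn (h k : ℕ) (hcop : Nat.Coprime h k) :
    ∀ r₁ ∈ Finset.Icc 1 (k-1), ∀ r₂ ∈ Finset.Icc 1 (k-1),
      h * r₁ % k = h * r₂ % k → r₁ = r₂ := by
  intro r₁ h1 r₂ h2 he
  simp only [Finset.mem_Icc] at h1 h2
  have : r₁ ≡ r₂ [MOD k] := Nat.ModEq.cancel_left_of_coprime (by rw [Nat.gcd_comm]; exact hcop) he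
  exact this.eq_of_lt_of_lt (by omega) (by omega)

lemma mod_perm_sum (h k : ℕ) (hcop : Nat.Coprime h k) (f : ℕ → ℤ) :
    ∑ r ∈ Finset.Icc 1 (k-1), f (h * r % k) = ∑ r ∈ Finset.Icc 1 (k-1), f r := by
  have himg : (Finset.Icc 1 (k-1)).image (fun r => h * r % k) = Finset.Icc 1 (k-1) := by
    apply Finset.eq_of_subset_of_card_le
    · intro t ht
      obtain ⟨r, hr, rfl⟩ := Finset.mem_image.mp ht
      exact mod_mem h k hcop hr
    · rw [Finset.card_image_of_injOn (mod_injOn h k hcop)]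
  conv_rhs => rw [← himg]
  rw [Finset.sum_image (mod_injOn h k hcop)]

lemma ded_i3 (h k : ℕ) (hcop : Nat.Coprime h k) :
    (∑ r ∈ Icc 1 (k-1), (r:ℤ)) + (k:ℤ) * (∑ r ∈ Icc 1 (k-1), ((h*r/k : ℕ):ℤ))
      = (h:ℤ) * ∑ r ∈ Icc 1 (k-1), (r:ℤ) := by
  have perm := mod_perm_sum h k hcop (fun s => (s:ℤ))
  conv_lhs => rw [← perm]
  rw [Finset.mul_sum, Finset.mul_sum, ← Finset.sum_add_distrib]
  apply Finset.sum_congr rfl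
  intro r _
  have e : ((h*r % k : ℕ):ℤ) + (k:ℤ) * ((h*r/k : ℕ):ℤ) = (h:ℤ)*(r:ℤ) := by
    exact_mod_cast congrArg (Nat.cast : ℕ → ℤ) (Nat.mod_add_div (h*r) k)
  linarith [e]

lemma ded_i4 (h k : ℕ) (hcop : Nat.Coprime h k) :
    (∑ r ∈ Icc 1 (k-1), (r:ℤ)^2) + 2*(h:ℤ)*(k:ℤ) * (∑ r ∈ Icc 1 (k-1), (r:ℤ)*((h*r/k : ℕ):ℤ))
      = (h:ℤ)^2 * (∑ r ∈ Icc 1 (k-1), (r:ℤ)^2) + (k:ℤ)^2 * ∑ r ∈ Icc 1 (k-1), ((h*r/k : ℕ):ℤ)^2 := by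
  have perm := mod_perm_sum h k hcop (fun s => (s:ℤ)^2)
  conv_lhs => rw [← perm]
  rw [Finset.mul_sum, Finset.mul_sum, Finset.mul_sum, ← Finset.sum_add_distrib,
    ← Finset.sum_add_distrib]
  apply Finset.sum_congr rfl
  intro r _
  have e : ((h*r % k : ℕ):ℤ) + (k:ℤ) * ((h*r/k : ℕ):ℤ) = (h:ℤ)*(r:ℤ) := by
    exact_mod_cast congrArg (Nat.cast : ℕ → ℤ) (Nat.mod_add_div (h*r) k)
  linear_combination (((h*r % k : ℕ):ℤ) + (h:ℤ)*(r:ℤ) - (k:ℤ)*((h*r/k : ℕ):ℤ)) * e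

lemma ded_i5 (h k : ℕ) (hh : 1 ≤ h) (hk : 1 ≤ k) (hcop : Nat.Coprime h k) :
    (∑ r ∈ Icc 1 (k-1), ((h*r/k : ℕ):ℤ)^2) + 2 * (∑ s ∈ Icc 1 (h-1), (s:ℤ)*((k*s/h : ℕ):ℤ))
    = ((k:ℤ)-1)*((h:ℤ)-1)^2 + ∑ s ∈ Icc 1 (h-1), ((k*s/h : ℕ):ℤ) := by
  have hk0 : 0 < k := hk
  have hh0 : 0 < h := hh
  have step2 : ∀ r ∈ Icc 1 (k-1), ((h*r/k : ℕ):ℤ)^2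
      = ∑ s ∈ Icc 1 (h-1), (if s*k ≤ h*r then (2*(s:ℤ)-1) else 0) := by
    intro r hr
    simp only [Finset.mem_Icc] at hr
    have hq : h*r/k < h := by
      apply Nat.div_lt_of_lt_mul
      calc h*r ≤ h*(k-1) := Nat.mul_le_mul_left h hr.2
        _ < k*h := by
            rw [Nat.mul_comm k h]
            exact mul_lt_mul_of_pos_left (by omega) hh0
    rw [← Finset.sum_filter]
    have hfil : (Icc 1 (h-1)).filter (fun s => s*k ≤ h*r) = Icc 1 (h*r/k) := by
      ext s
      simp only [Finset.mem_filter, Finset.mem_Icc]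
      constructor
      · rintro ⟨⟨h1, _⟩, h3⟩
        exact ⟨h1, (Nat.le_div_iff_mul_le hk0).mpr h3⟩
      · rintro ⟨h1, h2⟩
        exact ⟨⟨h1, by omega⟩, (Nat.le_div_iff_mul_le hk0).mp h2⟩
    rw [hfil, odd_sum_int]
  have step4 : ∀ s ∈ Icc 1 (h-1), (∑ r ∈ Icc 1 (k-1), (if s*k ≤ h*r then (2*(s:ℤ)-1) else 0))
      = (2*(s:ℤ)-1) * (((k:ℤ)-1) - ((k*s/h : ℕ):ℤ)) := by
    intro s hs
    simp only [Finset.mem_Icc] at hs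
    have hq' : k*s/h < k := by
      apply Nat.div_lt_of_lt_mul
      calc k*s ≤ k*(h-1) := Nat.mul_le_mul_left k hs.2
        _ < h*k := by
            rw [Nat.mul_comm h k]
            exact mul_lt_mul_of_pos_left (by omega) hk0
    rw [← Finset.sum_filter]
    have hfil : (Icc 1 (k-1)).filter (fun r => s*k ≤ h*r) = Icc (k*s/h + 1) (k-1) := by
      ext a
      simp only [Finset.mem_filter, Finset.mem_Icc]
      constructor
      · rintro ⟨⟨h1, h2⟩, h3⟩
        refine ⟨?_, h2⟩
        by_contra hcon
        have hle : a ≤ k*s/h := by omega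
        have hle2 : a*h ≤ k*s := (Nat.le_div_iff_mul_le hh0).mp hle
        have heq : h*a = k*s := by
          have e1 : s*k = k*s := Nat.mul_comm s k
          have e2 : a*h = h*a := Nat.mul_comm a h
          omega
        have hdvd : h ∣ s := by
          apply Nat.Coprime.dvd_of_dvd_mul_right hcop
          rw [Nat.mul_comm s k, ← heq]
          exact Dvd.intro a rfl
        have := Nat.le_of_dvd (by omega) hdvd
        omega
      · rintro ⟨h1, h2⟩
        have ha1 : 1 ≤ a := le_trans (Nat.succ_le_succ (Nat.zero_le _)) h1
        refine ⟨⟨ha1, h2⟩, ?_⟩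
        by_contra hcon
        have hlt : h*a < s*k := Nat.lt_of_not_le hcon
        have hle : a*h ≤ k*s := by
          rw [Nat.mul_comm a h, Nat.mul_comm k s]; exact Nat.le_of_lt hlt
        have : a ≤ k*s/h := (Nat.le_div_iff_mul_le hh0).mpr hle
        omega
    rw [hfil, Finset.sum_const, Nat.card_Icc, nsmul_eq_mul]
    set q' := k*s/h with hq'def
    have hcast : ((k - 1 + 1 - (q' + 1) : ℕ) : ℤ) = ((k:ℤ)-1) - (q' : ℤ) := by omega
    rw [hcast]; ring
  have hC : (∑ r ∈ Icc 1 (k-1), ((h*r/k : ℕ):ℤ)^2)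
      = ∑ s ∈ Icc 1 (h-1), (2*(s:ℤ)-1) * (((k:ℤ)-1) - ((k*s/h : ℕ):ℤ)) := by
    rw [Finset.sum_congr rfl step2, Finset.sum_comm]
    exact Finset.sum_congr rfl step4
  rw [hC, Finset.mul_sum, ← Finset.sum_add_distrib]
  have hpt : ∀ s ∈ Icc 1 (h-1),
      (2*(s:ℤ)-1) * (((k:ℤ)-1) - ((k*s/h : ℕ):ℤ)) + 2*((s:ℤ)*((k*s/h : ℕ):ℤ))
      = ((k:ℤ)-1)*(2*(s:ℤ)-1) + ((k*s/h : ℕ):ℤ) := by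
    intro s _; ring
  rw [Finset.sum_congr rfl hpt, Finset.sum_add_distrib, ← Finset.mul_sum, odd_sum_int]
  have hcast : (((h-1 : ℕ)):ℤ) = (h:ℤ)-1 := by omega
  rw [hcast]

/-- the "pure" Dedekind sum in closed floor form -/
noncomputable def dsum (h k : ℕ) : ℝ :=
  ∑ r ∈ Icc 1 (k-1),
    (((h*r : ℕ):ℝ)/(k:ℝ) - ((h*r/k : ℕ):ℝ) - 1/2) * ((r:ℝ)/(k:ℝ) - 1/2)

lemma ded_e1 (h k : ℕ) (hk : 1 ≤ k) :
    4*(k:ℝ)^2 * dsum h k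
      = 4*(h:ℝ)*(∑ r ∈ Icc 1 (k-1), (r:ℝ)^2)
        - 4*(k:ℝ)*(∑ r ∈ Icc 1 (k-1), (r:ℝ)*((h*r/k : ℕ):ℝ))
        - 2*(k:ℝ)*((h:ℝ)+1)*(∑ r ∈ Icc 1 (k-1), (r:ℝ))
        + 2*(k:ℝ)^2*(∑ r ∈ Icc 1 (k-1), ((h*r/k : ℕ):ℝ))
        + (k:ℝ)^2*((k:ℝ)-1) := by
  have hk0 : (k:ℝ) ≠ 0 := by positivity
  have hcard : ((Icc 1 (k-1)).card : ℝ) = (k:ℝ)-1 := by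
    rw [Nat.card_Icc, Nat.add_sub_cancel, Nat.cast_sub hk, Nat.cast_one]
  calc 4*(k:ℝ)^2 * dsum h k
      = ∑ r ∈ Icc 1 (k-1),
          ((4*(h:ℝ))*(r:ℝ)^2 - (4*(k:ℝ))*((r:ℝ)*((h*r/k : ℕ):ℝ))
            - (2*(k:ℝ)*((h:ℝ)+1))*(r:ℝ) + (2*(k:ℝ)^2)*((h*r/k : ℕ):ℝ) + (k:ℝ)^2) := by
        rw [dsum, Finset.mul_sum]
        apply Finset.sum_congr rfl
        intro r _
        push_cast
        field_simp
        ring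
    _ = _ := by
        rw [Finset.sum_add_distrib, Finset.sum_add_distrib, Finset.sum_sub_distrib,
          Finset.sum_sub_distrib, ← Finset.mul_sum, ← Finset.mul_sum, ← Finset.mul_sum,
          ← Finset.mul_sum, Finset.sum_const, nsmul_eq_mul, hcard]
        ring

/-- Reciprocity for the pure sums. -/
lemma dsum_reciprocity (h k : ℕ) (hh : 1 ≤ h) (hk : 1 ≤ k) (hcop : Nat.Coprime h k) :
    dsum h k + dsum k h = -1/4 + ((h:ℝ)^2 + (k:ℝ)^2 + 1) / (12*(h:ℝ)*(k:ℝ)) := by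
  have hk0 : (k:ℝ) ≠ 0 := by positivity
  have hh0 : (h:ℝ) ≠ 0 := by positivity
  have i1 : (∑ r ∈ Icc 1 (k-1), (r:ℝ)) * 2 = ((k:ℝ)-1)*(k:ℝ) := by
    have := congrArg (fun z : ℤ => (z:ℝ)) (gauss1 (k-1))
    push_cast [Nat.cast_sub hk] at this
    linear_combination this
  have i2 : (∑ r ∈ Icc 1 (k-1), (r:ℝ)^2) * 6 = ((k:ℝ)-1)*(k:ℝ)*(2*(k:ℝ)-1) := by
    have := congrArg (fun z : ℤ => (z:ℝ)) (gauss2 (k-1))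
    push_cast [Nat.cast_sub hk] at this
    linear_combination this
  have i1' : (∑ s ∈ Icc 1 (h-1), (s:ℝ)) * 2 = ((h:ℝ)-1)*(h:ℝ) := by
    have := congrArg (fun z : ℤ => (z:ℝ)) (gauss1 (h-1))
    push_cast [Nat.cast_sub hh] at this
    linear_combination this
  have i2' : (∑ s ∈ Icc 1 (h-1), (s:ℝ)^2) * 6 = ((h:ℝ)-1)*(h:ℝ)*(2*(h:ℝ)-1) := by
    have := congrArg (fun z : ℤ => (z:ℝ)) (gauss2 (h-1))
    push_cast [Nat.cast_sub hh] at this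
    linear_combination this
  have i3 : (∑ r ∈ Icc 1 (k-1), (r:ℝ)) + (k:ℝ) * (∑ r ∈ Icc 1 (k-1), ((h*r/k : ℕ):ℝ))
      = (h:ℝ) * ∑ r ∈ Icc 1 (k-1), (r:ℝ) := by
    have := congrArg (fun z : ℤ => (z:ℝ)) (ded_i3 h k hcop)
    simp only [Int.cast_add, Int.cast_mul, Int.cast_sum, Int.cast_natCast] at this
    exact this
  have i3' : (∑ s ∈ Icc 1 (h-1), (s:ℝ)) + (h:ℝ) * (∑ s ∈ Icc 1 (h-1), ((k*s/h : ℕ):ℝ))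
      = (k:ℝ) * ∑ s ∈ Icc 1 (h-1), (s:ℝ) := by
    have := congrArg (fun z : ℤ => (z:ℝ)) (ded_i3 k h hcop.symm)
    simp only [Int.cast_add, Int.cast_mul, Int.cast_sum, Int.cast_natCast] at this
    exact this
  have i4 : (∑ r ∈ Icc 1 (k-1), (r:ℝ)^2)
        + 2*(h:ℝ)*(k:ℝ) * (∑ r ∈ Icc 1 (k-1), (r:ℝ)*((h*r/k : ℕ):ℝ))
      = (h:ℝ)^2 * (∑ r ∈ Icc 1 (k-1), (r:ℝ)^2)
        + (k:ℝ)^2 * ∑ r ∈ Icc 1 (k-1), ((h*r/k : ℕ):ℝ)^2 := by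
    exact_mod_cast ded_i4 h k hcop
  have i5 : (∑ r ∈ Icc 1 (k-1), ((h*r/k : ℕ):ℝ)^2)
        + 2 * (∑ s ∈ Icc 1 (h-1), (s:ℝ)*((k*s/h : ℕ):ℝ))
      = ((k:ℝ)-1)*((h:ℝ)-1)^2 + ∑ s ∈ Icc 1 (h-1), ((k*s/h : ℕ):ℝ) := by
    exact_mod_cast ded_i5 h k hh hk hcop
  have e1 := ded_e1 h k hk
  have e1' := ded_e1 k h hh
  have key : ((h:ℝ)*(k:ℝ)) * (48*(h:ℝ)*(k:ℝ)*(dsum h k + dsum k h))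
      = ((h:ℝ)*(k:ℝ)) * (4*((h:ℝ)^2+(k:ℝ)^2+1) - 12*(h:ℝ)*(k:ℝ)) := by
    linear_combination (12*(h:ℝ)^2)*e1 + (12*(k:ℝ)^2)*e1' + (-24*(h:ℝ))*i4
      + (-24*(h:ℝ)*(k:ℝ)^2)*i5 + (24*(h:ℝ)^2*(k:ℝ))*i3 + (24*(h:ℝ)*(k:ℝ)^2 - 24*(k:ℝ)^2)*i3'
      + (-24*(h:ℝ)^2*(k:ℝ))*i1 + (4*(h:ℝ)^3 + 4*(h:ℝ))*i2
      + (12*(k:ℝ)^2 - 12*(k:ℝ)^3 - 24*(h:ℝ)*(k:ℝ)^2)*i1' + (8*(k:ℝ)^3)*i2'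
  have key2 : 48*(h:ℝ)*(k:ℝ)*(dsum h k + dsum k h)
      = 4*((h:ℝ)^2+(k:ℝ)^2+1) - 12*(h:ℝ)*(k:ℝ) :=
    mul_left_cancel₀ (by positivity) key
  have hfin : dsum h k + dsum k h
      = (4*((h:ℝ)^2+(k:ℝ)^2+1) - 12*(h:ℝ)*(k:ℝ))/(48*(h:ℝ)*(k:ℝ)) := by
    rw [eq_div_iff (by positivity)]
    linear_combination key2
  rw [hfin]
  field_simp
  ring

lemma sum_shift (a : ℕ) (ha : 1 ≤ a) (g : ℤ → ℝ) (hg : ∀ n t : ℤ, g (n + a*t) = g n) (y : ℤ) :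
    ∑ r ∈ Icc 1 a, g ((r:ℤ) + y) = ∑ r ∈ Icc 1 a, g (r:ℤ) := by
  have ha0 : (0:ℤ) < (a:ℤ) := by exact_mod_cast ha
  have haux : ∀ (z : ℤ), ∀ r ∈ Icc 1 a,
      ((((r:ℤ) + z - 1) % (a:ℤ)).toNat + 1 : ℕ) ∈ Icc 1 a := by
    intro z r _
    have h1 : 0 ≤ ((r:ℤ) + z - 1) % (a:ℤ) := Int.emod_nonneg _ (by omega)
    have h2 : ((r:ℤ) + z - 1) % (a:ℤ) < a := Int.emod_lt_of_pos _ ha0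
    simp only [Finset.mem_Icc]
    omega
  have hinv : ∀ (z : ℤ), ∀ r ∈ Icc 1 a,
      (((((((r:ℤ) + z - 1) % (a:ℤ)).toNat + 1 : ℕ) : ℤ) + (-z) - 1) % (a:ℤ)).toNat + 1 = r := by
    intro z r hr
    simp only [Finset.mem_Icc] at hr
    have h1 : 0 ≤ ((r:ℤ) + z - 1) % (a:ℤ) := Int.emod_nonneg _ (by omega)
    have hcast : ((((((r:ℤ) + z - 1) % (a:ℤ)).toNat + 1 : ℕ)) : ℤ)
        = ((r:ℤ) + z - 1) % (a:ℤ) + 1 := by omega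
    rw [hcast]
    have hm : (((r:ℤ) + z - 1) % (a:ℤ)) % (a:ℤ) = ((r:ℤ) + z - 1) % (a:ℤ) :=
      Int.emod_emod_of_dvd _ dvd_rfl
    have hsub : ((((r:ℤ) + z - 1) % (a:ℤ)) - z) % (a:ℤ) = (((r:ℤ) + z - 1) - z) % (a:ℤ) := by
      rw [Int.sub_emod, hm, ← Int.sub_emod]
    have e1 : (((r:ℤ) + z - 1) % (a:ℤ) + 1 + (-z) - 1) % (a:ℤ) = ((r:ℤ) - 1) % (a:ℤ) := by
      calc (((r:ℤ) + z - 1) % (a:ℤ) + 1 + (-z) - 1) % (a:ℤ)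
          = ((((r:ℤ) + z - 1) % (a:ℤ)) - z) % (a:ℤ) := by congr 1; ring
        _ = (((r:ℤ) + z - 1) - z) % (a:ℤ) := hsub
        _ = ((r:ℤ) - 1) % (a:ℤ) := by congr 1; ring
    rw [e1, Int.emod_eq_of_lt (by omega) (by omega)]
    omega
  refine Finset.sum_nbij' (fun r => ((((r:ℤ) + y - 1) % (a:ℤ)).toNat + 1 : ℕ))
    (fun r => ((((r:ℤ) + (-y) - 1) % (a:ℤ)).toNat + 1 : ℕ)) ?_ ?_ ?_ ?_ ?_
  · exact haux y
  · exact haux (-y)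
  · exact hinv y
  · intro r hr
    have := hinv (-y) r hr
    simpa using this
  · intro r hr
    have h1 : 0 ≤ ((r:ℤ) + y - 1) % (a:ℤ) := Int.emod_nonneg _ (by omega)
    have hdm := Int.emod_add_mul_ediv ((r:ℤ) + y - 1) (a:ℤ)
    have hcast : ((((((r:ℤ) + y - 1) % (a:ℤ)).toNat + 1 : ℕ)) : ℤ)
        = ((r:ℤ) + y - 1) % (a:ℤ) + 1 := by omega
    have harg : (r:ℤ) + y
        = ((((((r:ℤ) + y - 1) % (a:ℤ)).toNat + 1 : ℕ)) : ℤ) + a * (((r:ℤ) + y - 1) / (a:ℤ)) := by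
      rw [hcast]; linarith [hdm]
    conv_lhs => rw [harg, hg]

lemma drSum_eq_dsum (b a : ℕ) (ha : 1 ≤ a) (hcop : Nat.Coprime b a) (x y : ℤ) :
    drSum (b:ℤ) a (x:ℝ) (y:ℝ) = dsum b a := by
  have ha0 : (a:ℝ) ≠ 0 := by positivity
  set g : ℤ → ℝ := fun n => sawtooth ((b:ℝ) * ((n:ℝ) / (a:ℝ))) * sawtooth ((n:ℝ) / (a:ℝ)) with hg
  have hper : ∀ n t : ℤ, g (n + a*t) = g n := by
    intro n t
    have e1 : (b:ℝ) * ((((n + a*t : ℤ)):ℝ) / (a:ℝ)) = (b:ℝ) * ((n:ℝ) / (a:ℝ)) + ((b*t : ℤ):ℝ) := by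
      push_cast; field_simp
    have e2 : (((n + a*t : ℤ)):ℝ) / (a:ℝ) = (n:ℝ) / (a:ℝ) + ((t : ℤ):ℝ) := by
      push_cast; field_simp
    simp only [hg]
    rw [e1, e2, sawtooth_add_int_s10, sawtooth_add_int_s10]
  -- rewrite drSum as a shifted sum of g
  have h1 : drSum (b:ℤ) a (x:ℝ) (y:ℝ) = ∑ r ∈ Icc 1 a, g ((r:ℤ) + y) := by
    rw [drSum]
    apply Finset.sum_congr rfl
    intro r _
    have e3 : ((r:ℝ) + (y:ℝ)) = (((r:ℤ) + y : ℤ):ℝ) := by push_cast; ring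
    rw [e3]
    simp only [hg]
    rw [sawtooth_int_add]
    norm_cast
  rw [h1, sum_shift a ha g hper y]
  -- drop the top term r = a
  have htop : g (a:ℤ) = 0 := by
    simp only [hg]
    have : ((a:ℤ):ℝ) / (a:ℝ) = 1 := by
      rw [Int.cast_natCast]; field_simp
    rw [this]
    have : sawtooth 1 = 0 := by
      unfold sawtooth
      simp [Int.fract_one]
    rw [this, mul_zero]
  have hsplit : ∑ r ∈ Icc 1 a, g (r:ℤ) = ∑ r ∈ Icc 1 (a-1), g (r:ℤ) := by
    have : a = (a-1) + 1 := by omega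
    rw [this, Finset.sum_Icc_succ_top (by omega)]
    rw [show (a-1) + 1 = a by omega, htop, add_zero]
  rw [hsplit, dsum]
  apply Finset.sum_congr rfl
  intro r hr
  simp only [Finset.mem_Icc] at hr
  have hra : 1 ≤ r ∧ r ≤ a - 1 := hr
  -- evaluate the two sawtooth factors
  have hnd1 : ¬ (a ∣ r) := by
    intro hd
    have := Nat.le_of_dvd (by omega) hd
    omega
  have hnd2 : ¬ (a ∣ b*r) := by
    intro hd
    have : a ∣ r := (Nat.Coprime.dvd_of_dvd_mul_left (hcop.symm)) hd
    exact hnd1 this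
  have ev1 : sawtooth ((r:ℝ) / (a:ℝ)) = (r:ℝ)/(a:ℝ) - 1/2 := by
    have := sawtooth_eval (m := r) (n := a) (by omega) hnd1
    have hz : r / a = 0 := Nat.div_eq_of_lt (by omega)
    rw [hz] at this
    simpa using this
  have ev2 : sawtooth ((b:ℝ) * ((r:ℝ) / (a:ℝ)))
      = ((b*r : ℕ):ℝ)/(a:ℝ) - ((b*r/a : ℕ):ℝ) - 1/2 := by
    have e4 : (b:ℝ) * ((r:ℝ) / (a:ℝ)) = ((b*r : ℕ):ℝ)/(a:ℝ) := by
      push_cast; ring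
    rw [e4]
    exact sawtooth_eval (by omega) hnd2
  simp only [hg]
  rw [show (((r:ℕ):ℤ):ℝ) = (r:ℝ) by push_cast; ring, ev1, ev2]


/-- Dedekind–Rademacher reciprocity, integer case: for coprime positive integers `α`, `β`
and integers `x`, `y`,
`s(β, α; x, y) + s(α, β; y, x) = -1/4 + (α² + β² + 1)/(12αβ)`. -/
theorem drSum_reciprocity_int
    (α β : ℕ) (hα : 0 < α) (hβ : 0 < β) (hcop : Nat.Coprime α β) (x y : ℤ) :
    drSum (β : ℤ) α (x : ℝ) (y : ℝ) + drSum (α : ℤ) β (y : ℝ) (x : ℝ) =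
      -1 / 4 + ((α : ℝ) ^ 2 + (β : ℝ) ^ 2 + 1) / (12 * (α : ℝ) * (β : ℝ)) := by
  rw [drSum_eq_dsum β α hα hcop.symm x y, drSum_eq_dsum α β hβ hcop y x,
    dsum_reciprocity β α hβ hα hcop.symm]
  ring
end

section
/- Let m be a positive integer, α_1,…,α_m positive integers, β_1,…,β_m and γ_1,…,γ_m integers, c and ℓ real numbers, and ρ ∈ (0,1). Set G(n) = −∑_{i=1}^{m} {(γ_i − n β_i)/α_i} for n ∈ ℤ. Then for every complex number s with Re(s) > 2, ∑_{n ∈ ℤ} sign(n+ρ) · ( c + G(n) − ℓ(n+ρ) ) / |n+ρ|^s = c·( ζ(s, ρ) − ζ(s, 1−ρ) ) − ∑_{i=1}^{m} (1/α_i^s) ∑_{k=0}^{α_i − 1} {(γ_i − k β_i)/α_i} · ( ζ(s, (k+ρ)/α_i) − ζ(s, 1 − (k+ρ)/α_i) ) − ℓ·( ζ(s−1, ρ) + ζ(s−1, 1−ρ) ), where ζ(s,a) denotes the Hurwitz zeta function. -/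
open Complex



lemma summable_div_cpow {a : ℝ} (ha : 0 < a) {s : ℂ} (hs : 1 < s.re)
    (v : ℕ → ℂ) (C : ℝ) (hv : ∀ n, ‖v n‖ ≤ C) :
    Summable fun n : ℕ => v n / ((n : ℂ) + (a : ℂ)) ^ s := by
  have h0 : ∀ n : ℕ, (0:ℝ) < (n:ℝ) + a := fun n => by positivity
  apply Summable.of_norm
  have hmaj : Summable fun n : ℕ => C * (1 / |(n:ℝ) + a| ^ s.re) :=
    ((Real.summable_one_div_nat_add_rpow a s.re).mpr hs).mul_left C
  refine hmaj.of_nonneg_of_le (fun n => norm_nonneg _) (fun n => ?_)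
  have hcast : ((n:ℂ) + (a:ℂ)) = (((n:ℝ) + a : ℝ) : ℂ) := by push_cast; ring
  rw [hcast, norm_div]
  rw [Complex.norm_cpow_eq_rpow_re_of_pos (h0 n), mul_one_div, abs_of_pos (h0 n)]
  gcongr
  exact hv n

lemma summable_one_div_cpow {a : ℝ} (ha : 0 < a) {s : ℂ} (hs : 1 < s.re) :
    Summable fun n : ℕ => 1 / ((n : ℂ) + (a : ℂ)) ^ s :=
  summable_div_cpow ha hs (fun _ => 1) 1 (fun n => by simp)

lemma summable_w {a : ℝ} (ha : 0 < a) {s : ℂ} (hs : 1 < s.re)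
    (w : ℕ → ℝ) (hwb : ∀ n, |w n| ≤ 1) :
    Summable fun n : ℕ => ((w n : ℝ) : ℂ) / ((n : ℂ) + (a : ℂ)) ^ s :=
  summable_div_cpow ha hs _ 1 (fun n => by
    rw [Complex.norm_real, Real.norm_eq_abs]; exact hwb n)

lemma point_lin {a : ℝ} (ha : 0 < a) (s : ℂ) (n : ℕ) :
    ((n:ℂ) + (a:ℂ)) / ((n:ℂ) + (a:ℂ)) ^ s = 1 / ((n:ℂ) + (a:ℂ)) ^ (s - 1) := by
  have hx : ((n:ℂ) + (a:ℂ)) ≠ 0 := by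
    have h : ((n:ℂ) + (a:ℂ)) = (((n:ℝ) + a : ℝ) : ℂ) := by push_cast; ring
    rw [h, Complex.ofReal_ne_zero]
    positivity
  rw [Complex.cpow_sub _ _ hx, Complex.cpow_one, one_div_div]

lemma group_tsum {s : ℂ} (hs : 1 < s.re) {α : ℕ} (hα : 0 < α)
    (w : ℕ → ℝ) (hwb : ∀ n, |w n| ≤ 1) (hw : ∀ q k, w (q * α + k) = w k)
    {a : ℝ} (ha : 0 < a) :
    ∑' n : ℕ, ((w n : ℝ) : ℂ) / ((n:ℂ) + (a:ℂ)) ^ s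
      = (1/(α:ℂ)^s) * ∑ k ∈ Finset.range α,
          ((w k : ℝ) : ℂ) * hurwitzZetaSeries s (((k:ℝ)+a)/(α:ℝ)) := by
  haveI : NeZero α := ⟨hα.ne'⟩
  have hαR : (0:ℝ) < (α:ℝ) := by exact_mod_cast hα
  set f : ℕ → ℂ := fun n => ((w n : ℝ):ℂ) / ((n:ℂ)+(a:ℂ))^s with hf
  have hsum : Summable f := summable_w ha hs w hwb
  set e : Fin α × ℕ ≃ ℕ := (Equiv.prodComm _ _).trans (Nat.divModEquiv α).symm with he
  have hsum' : Summable (f ∘ e) := e.summable_iff.mpr hsum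
  have key : ∀ (k : Fin α) (q : ℕ), f (q * α + (k:ℕ))
      = (1/(α:ℂ)^s) * (((w (k:ℕ) : ℝ):ℂ) *
          (1 / ((q:ℂ) + (((((k:ℕ):ℝ)+a)/(α:ℝ) : ℝ):ℂ)) ^ s)) := by
    intro k q
    have hb : (0:ℝ) < (q:ℝ) + (((k:ℕ):ℝ)+a)/(α:ℝ) := by positivity
    have hden : (((q * α + (k:ℕ) : ℕ)):ℂ) + (a:ℂ)
        = ((((α:ℝ) * ((q:ℝ) + (((k:ℕ):ℝ)+a)/(α:ℝ))) : ℝ) : ℂ) := by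
      have h2 : (α:ℝ) * ((q:ℝ) + (((k:ℕ):ℝ)+a)/(α:ℝ)) = (q:ℝ)*(α:ℝ) + (k:ℕ) + a := by
        field_simp; ring
      rw [h2]; push_cast; ring
    rw [hf]
    simp only
    rw [hw q k, hden, Complex.ofReal_mul, Complex.mul_cpow_ofReal_nonneg hαR.le hb.le]
    have h3 : ((((q:ℝ) + (((k:ℕ):ℝ)+a)/(α:ℝ)) : ℝ) : ℂ)
        = (q:ℂ) + (((((k:ℕ):ℝ)+a)/(α:ℝ) : ℝ):ℂ) := by push_cast; ring
    rw [h3]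
    have h4 : (((α:ℝ)):ℂ) = ((α:ℕ):ℂ) := by push_cast; rfl
    rw [h4]
    ring
  calc ∑' n, f n = ∑' p : Fin α × ℕ, f (e p) := (e.tsum_eq f).symm
    _ = ∑' (k : Fin α), ∑' (q : ℕ), f (e (k, q)) :=
        Summable.tsum_prod' hsum' (fun k => (hsum'.comp_injective (fun q q' h => by
          simpa using congrArg Prod.snd h)))
    _ = ∑' (k : Fin α), (1/(α:ℂ)^s) * (((w (k:ℕ) : ℝ):ℂ) *
          hurwitzZetaSeries s ((((k:ℕ):ℝ)+a)/(α:ℝ))) := by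
        refine tsum_congr fun k => ?_
        have h5 : ∀ q : ℕ, e (k, q) = q * α + (k:ℕ) := fun q => by
          simp [he, Nat.divModEquiv]
        rw [tsum_congr fun q => by rw [h5 q, key k q]]
        rw [tsum_mul_left, tsum_mul_left]
        rfl
    _ = ∑ k ∈ Finset.range α, (1/(α:ℂ)^s) * (((w k : ℝ):ℂ) *
          hurwitzZetaSeries s (((k:ℝ)+a)/(α:ℝ))) := by
        rw [tsum_fintype]
        exact Fin.sum_univ_eq_sum_range
          (fun k => (1/(α:ℂ)^s) * (((w k : ℝ):ℂ) *
            hurwitzZetaSeries s (((k:ℝ)+a)/(α:ℝ)))) α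
    _ = (1/(α:ℂ)^s) * ∑ k ∈ Finset.range α, ((w k : ℝ):ℂ) *
          hurwitzZetaSeries s (((k:ℝ)+a)/(α:ℝ)) := by
        rw [Finset.mul_sum]

/-- With `G(n) = -∑ᵢ {(γᵢ - n βᵢ)/αᵢ}`, `ρ ∈ (0,1)` and `Re s > 2`,
`∑_{n ∈ ℤ} sign(n+ρ)(c + G(n) - ℓ(n+ρ))/|n+ρ|^s
  = c(ζ(s,ρ) - ζ(s,1-ρ))
    - ∑ᵢ αᵢ⁻ˢ ∑_{k=0}^{αᵢ-1} {(γᵢ-kβᵢ)/αᵢ} (ζ(s,(k+ρ)/αᵢ) - ζ(s,1-(k+ρ)/αᵢ))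
    - ℓ(ζ(s-1,ρ) + ζ(s-1,1-ρ))`. -/
theorem eta_series_flat_eq
    (m : ℕ) (hm : 0 < m) (α : Fin m → ℕ) (hα : ∀ i, 0 < α i)
    (β γ : Fin m → ℤ) (c ℓ : ℝ) (ρ : ℝ) (hρ : ρ ∈ Set.Ioo (0 : ℝ) 1)
    (G : ℤ → ℝ)
    (hG : ∀ n : ℤ, G n = -∑ i, Int.fract (((γ i : ℝ) - (n : ℝ) * (β i : ℝ)) / (α i : ℝ)))
    (s : ℂ) (hs : 2 < s.re) :
    ∑' n : ℤ, ((Real.sign ((n : ℝ) + ρ) * (c + G n - ℓ * ((n : ℝ) + ρ)) : ℝ) : ℂ) /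
        ((|(n : ℝ) + ρ| : ℝ) : ℂ) ^ s =
      (c : ℂ) * (hurwitzZetaSeries s ρ - hurwitzZetaSeries s (1 - ρ)) -
        (∑ i, (1 / (α i : ℂ) ^ s) *
          ∑ k ∈ Finset.range (α i),
            ((Int.fract (((γ i : ℝ) - (k : ℝ) * (β i : ℝ)) / (α i : ℝ)) : ℝ) : ℂ) *
              (hurwitzZetaSeries s (((k : ℝ) + ρ) / (α i : ℝ)) -
                hurwitzZetaSeries s (1 - ((k : ℝ) + ρ) / (α i : ℝ)))) -
        (ℓ : ℂ) * (hurwitzZetaSeries (s - 1) ρ + hurwitzZetaSeries (s - 1) (1 - ρ)) := by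
  obtain ⟨hρ0, hρ1⟩ := hρ
  have ha2 : (0:ℝ) < 1 - ρ := by linarith
  have hs1 : 1 < s.re := by linarith
  have hs1' : 1 < (s-1).re := by
    have : (s-1).re = s.re - 1 := by simp
    rw [this]; linarith
  have hαR : ∀ i, (0:ℝ) < ((α i : ℕ):ℝ) := fun i => by exact_mod_cast hα i
  -- weight functions
  set wp : Fin m → ℕ → ℝ :=
    fun i n => Int.fract (((γ i : ℝ) - (n:ℝ) * (β i : ℝ)) / ((α i : ℕ) : ℝ)) with hwp
  set wn : Fin m → ℕ → ℝ :=
    fun i n => Int.fract (((γ i : ℝ) + ((n:ℝ)+1) * (β i : ℝ)) / ((α i : ℕ) : ℝ)) with hwn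
  have hwpb : ∀ i n, |wp i n| ≤ 1 := fun i n => by
    rw [hwp]; simp only
    rw [_root_.abs_of_nonneg (Int.fract_nonneg (((γ i : ℝ) - (n:ℝ) * (β i : ℝ)) / ((α i : ℕ) : ℝ)))]
    exact (Int.fract_lt_one _).le
  have hwnb : ∀ i n, |wn i n| ≤ 1 := fun i n => by
    rw [hwn]; simp only
    rw [_root_.abs_of_nonneg (Int.fract_nonneg (((γ i : ℝ) + ((n:ℝ)+1) * (β i : ℝ)) / ((α i : ℕ) : ℝ)))]
    exact (Int.fract_lt_one _).le
  have hwpper : ∀ i q k, wp i (q * α i + k) = wp i k := by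
    intro i q k
    have h1 : ((γ i : ℝ) - ((q * α i + k : ℕ):ℝ) * (β i : ℝ)) / ((α i:ℕ):ℝ)
        = ((γ i:ℝ) - (k:ℝ) * (β i:ℝ)) / ((α i:ℕ):ℝ) - (((q:ℤ) * β i : ℤ) : ℝ) := by
      have := (hαR i).ne'
      push_cast
      field_simp
      ring
    simp only [hwp]
    rw [h1, Int.fract_sub_intCast]
  have hwnper : ∀ i q k, wn i (q * α i + k) = wn i k := by
    intro i q k
    have h1 : ((γ i : ℝ) + (((q * α i + k : ℕ):ℝ)+1) * (β i : ℝ)) / ((α i:ℕ):ℝ)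
        = ((γ i:ℝ) + ((k:ℝ)+1) * (β i:ℝ)) / ((α i:ℕ):ℝ) + (((q:ℤ) * β i : ℤ) : ℝ) := by
      have := (hαR i).ne'
      push_cast
      field_simp
      ring
    simp only [hwn]
    rw [h1, Int.fract_add_intCast]
  -- the two ℕ-indexed pieces
  set Gp : ℕ → ℝ := fun n => ∑ i, wp i n with hGp
  set Gn : ℕ → ℝ := fun n => ∑ i, wn i n with hGn
  set Dp : ℕ → ℂ := fun n => ((n:ℂ) + (ρ:ℂ))^s with hDp
  set Dn : ℕ → ℂ := fun n => ((n:ℂ) + ((1-ρ:ℝ):ℂ))^s with hDn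
  set P : ℕ → ℂ := fun n =>
    (c:ℂ)/Dp n - ((Gp n : ℝ):ℂ)/Dp n - ((ℓ:ℂ)*((n:ℂ)+(ρ:ℂ)))/Dp n with hP
  set N : ℕ → ℂ := fun n =>
    (c:ℂ)/Dn n - ((Gn n : ℝ):ℂ)/Dn n + ((ℓ:ℂ)*((n:ℂ)+((1-ρ:ℝ):ℂ)))/Dn n with hN
  set F : ℤ → ℂ := fun n =>
    ((Real.sign ((n : ℝ) + ρ) * (c + G n - ℓ * ((n : ℝ) + ρ)) : ℝ) : ℂ) /
      ((|(n : ℝ) + ρ| : ℝ) : ℂ) ^ s with hF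
  -- pointwise identification
  have hFP : ∀ n : ℕ, F (n : ℤ) = P n := by
    intro n
    have hpos : (0:ℝ) < ((n:ℤ):ℝ) + ρ := by push_cast; positivity
    have hGcast : G (n:ℤ) = -Gp n := by
      rw [hG, hGp]
      congr 1
      all_goals
        refine Finset.sum_congr rfl fun i _ => ?_
        rw [hwp]
        push_cast
        try ring_nf
    rw [hF]
    simp only
    rw [Real.sign_of_pos hpos, abs_of_pos hpos, hGcast]
    have hden : ((((n:ℤ):ℝ) + ρ : ℝ):ℂ) = (n:ℂ) + (ρ:ℂ) := by push_cast; ring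
    rw [hden, hP, hDp]
    simp only
    push_cast
    ring
  have hFN : ∀ n : ℕ, F (-((n:ℤ) + 1)) = -N n := by
    intro n
    have hneg : ((-((n:ℤ)+1):ℤ):ℝ) + ρ < 0 := by push_cast; linarith
    have habs : |((-((n:ℤ)+1):ℤ):ℝ) + ρ| = (n:ℝ) + (1 - ρ) := by
      rw [abs_of_neg hneg]; push_cast; ring
    have hGcast : G (-((n:ℤ)+1)) = -Gn n := by
      rw [hG, hGn]
      congr 1
      all_goals
        refine Finset.sum_congr rfl fun i _ => ?_
        rw [hwn]
        push_cast
        try ring_nf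
    rw [hF]
    simp only
    rw [Real.sign_of_neg hneg, habs, hGcast]
    have hden : (((n:ℝ) + (1-ρ) : ℝ):ℂ) = (n:ℂ) + ((1-ρ:ℝ):ℂ) := by push_cast; ring
    rw [hden, hN, hDn]
    simp only
    push_cast
    ring
  -- summability of the pieces
  have hGpb : ∀ n, ‖((Gp n : ℝ):ℂ)‖ ≤ (m:ℝ) := by
    intro n
    rw [Complex.norm_real, Real.norm_eq_abs, hGp]
    simp only
    calc |∑ i, wp i n| ≤ ∑ i, |wp i n| := Finset.abs_sum_le_sum_abs _ _
      _ ≤ ∑ _i : Fin m, (1:ℝ) := Finset.sum_le_sum fun i _ => hwpb i n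
      _ = (m:ℝ) := by simp
  have hGnb : ∀ n, ‖((Gn n : ℝ):ℂ)‖ ≤ (m:ℝ) := by
    intro n
    rw [Complex.norm_real, Real.norm_eq_abs, hGn]
    simp only
    calc |∑ i, wn i n| ≤ ∑ i, |wn i n| := Finset.abs_sum_le_sum_abs _ _
      _ ≤ ∑ _i : Fin m, (1:ℝ) := Finset.sum_le_sum fun i _ => hwnb i n
      _ = (m:ℝ) := by simp
  have hPc : Summable fun n => (c:ℂ)/Dp n :=
    summable_div_cpow hρ0 hs1 _ ‖(c:ℂ)‖ (fun n => le_rfl)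
  have hNc : Summable fun n => (c:ℂ)/Dn n :=
    summable_div_cpow ha2 hs1 _ ‖(c:ℂ)‖ (fun n => le_rfl)
  have hPg : Summable fun n => ((Gp n : ℝ):ℂ)/Dp n :=
    summable_div_cpow hρ0 hs1 _ (m:ℝ) hGpb
  have hNg : Summable fun n => ((Gn n : ℝ):ℂ)/Dn n :=
    summable_div_cpow ha2 hs1 _ (m:ℝ) hGnb
  have hlinP : ∀ n : ℕ, ((ℓ:ℂ)*((n:ℂ)+(ρ:ℂ)))/Dp n = (ℓ:ℂ) * (1/((n:ℂ)+(ρ:ℂ))^(s-1)) := by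
    intro n
    rw [hDp]
    simp only
    rw [mul_div_assoc, point_lin hρ0 s n]
  have hlinN : ∀ n : ℕ,
      ((ℓ:ℂ)*((n:ℂ)+((1-ρ:ℝ):ℂ)))/Dn n = (ℓ:ℂ) * (1/((n:ℂ)+((1-ρ:ℝ):ℂ))^(s-1)) := by
    intro n
    rw [hDn]
    simp only
    rw [mul_div_assoc, point_lin ha2 s n]
  have hPl : Summable fun n : ℕ => ((ℓ:ℂ)*((n:ℂ)+(ρ:ℂ)))/Dp n :=
    (((summable_one_div_cpow hρ0 hs1').mul_left (ℓ:ℂ))).congr fun n => (hlinP n).symm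
  have hNl : Summable fun n : ℕ => ((ℓ:ℂ)*((n:ℂ)+((1-ρ:ℝ):ℂ)))/Dn n :=
    (((summable_one_div_cpow ha2 hs1').mul_left (ℓ:ℂ))).congr fun n => (hlinN n).symm
  have hPsum : Summable P := ((hPc.sub hPg).sub hPl).congr fun n => by rw [hP]
  have hNsum : Summable N := ((hNc.sub hNg).add hNl).congr fun n => by rw [hN]
  -- tsum values
  have TPc : ∑' n : ℕ, (c:ℂ)/Dp n = (c:ℂ) * hurwitzZetaSeries s ρ := by
    rw [tsum_congr fun n => by rw [div_eq_mul_one_div], tsum_mul_left]; rfl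
  have TNc : ∑' n : ℕ, (c:ℂ)/Dn n = (c:ℂ) * hurwitzZetaSeries s (1-ρ) := by
    rw [tsum_congr fun n => by rw [div_eq_mul_one_div], tsum_mul_left]; rfl
  have TPl : ∑' n : ℕ, ((ℓ:ℂ)*((n:ℂ)+(ρ:ℂ)))/Dp n = (ℓ:ℂ) * hurwitzZetaSeries (s-1) ρ := by
    rw [tsum_congr hlinP, tsum_mul_left]; rfl
  have TNl : ∑' n : ℕ, ((ℓ:ℂ)*((n:ℂ)+((1-ρ:ℝ):ℂ)))/Dn n
      = (ℓ:ℂ) * hurwitzZetaSeries (s-1) (1-ρ) := by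
    rw [tsum_congr hlinN, tsum_mul_left]; rfl
  have TPg : ∑' n : ℕ, ((Gp n : ℝ):ℂ)/Dp n
      = ∑ i, (1/((α i:ℕ):ℂ)^s) * ∑ k ∈ Finset.range (α i),
          ((wp i k : ℝ):ℂ) * hurwitzZetaSeries s (((k:ℝ)+ρ)/((α i:ℕ):ℝ)) := by
    have h1 : ∀ n : ℕ, ((Gp n : ℝ):ℂ)/Dp n = ∑ i, ((wp i n : ℝ):ℂ)/Dp n := by
      intro n
      rw [hGp]
      push_cast
      rw [Finset.sum_div]
    rw [tsum_congr h1, Summable.tsum_finsetSum fun i _ => summable_w hρ0 hs1 (wp i) (hwpb i)]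
    exact Finset.sum_congr rfl fun i _ =>
      group_tsum hs1 (hα i) (wp i) (hwpb i) (hwpper i) hρ0
  have TNg : ∑' n : ℕ, ((Gn n : ℝ):ℂ)/Dn n
      = ∑ i, (1/((α i:ℕ):ℂ)^s) * ∑ k ∈ Finset.range (α i),
          ((wp i k : ℝ):ℂ) * hurwitzZetaSeries s (1 - ((k:ℝ)+ρ)/((α i:ℕ):ℝ)) := by
    have h1 : ∀ n : ℕ, ((Gn n : ℝ):ℂ)/Dn n = ∑ i, ((wn i n : ℝ):ℂ)/Dn n := by
      intro n
      rw [hGn]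
      push_cast
      rw [Finset.sum_div]
    rw [tsum_congr h1, Summable.tsum_finsetSum fun i _ => summable_w ha2 hs1 (wn i) (hwnb i)]
    refine Finset.sum_congr rfl fun i _ => ?_
    rw [group_tsum hs1 (hα i) (wn i) (hwnb i) (hwnper i) ha2]
    congr 1
    -- reflection
    rw [← Finset.sum_range_reflect]
    refine Finset.sum_congr rfl fun k hk => ?_
    have hk' : k < α i := Finset.mem_range.mp hk
    have hcast : ((α i - 1 - k : ℕ):ℝ) = ((α i:ℕ):ℝ) - 1 - (k:ℝ) := by
      have h1k : 1 + k ≤ α i := by omega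
      rw [Nat.sub_sub]
      push_cast [Nat.cast_sub h1k]
      ring
    have f1 : wn i (α i - 1 - k) = wp i k := by
      rw [hwn, hwp]
      simp only
      have harg : ((γ i:ℝ) + (((α i - 1 - k : ℕ):ℝ)+1) * (β i:ℝ)) / ((α i:ℕ):ℝ)
          = ((γ i:ℝ) - (k:ℝ) * (β i:ℝ)) / ((α i:ℕ):ℝ) + ((β i : ℤ):ℝ) := by
        rw [hcast]
        have := (hαR i).ne'
        field_simp
        ring
      rw [harg, Int.fract_add_intCast]
    have f2 : (((α i - 1 - k : ℕ):ℝ)+(1-ρ))/((α i:ℕ):ℝ) = 1 - ((k:ℝ)+ρ)/((α i:ℕ):ℝ) := by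
      rw [hcast]
      have := (hαR i).ne'
      field_simp
      ring
    rw [f1, f2]
  -- split the ℤ-sum
  have hsplit : ∑' n : ℤ, F n = (∑' n : ℕ, P n) - ∑' n : ℕ, N n := by
    have h1 : Summable fun n : ℕ => F n := hPsum.congr fun n => (hFP n).symm
    have h2 : Summable fun n : ℕ => F (-((n:ℤ)+1)) :=
      (hNsum.neg).congr fun n => (hFN n).symm
    rw [tsum_of_nat_of_neg_add_one h1 h2, tsum_congr hFP, tsum_congr hFN, tsum_neg]
    ring
  have TP : ∑' n : ℕ, P n = (∑' n : ℕ, (c:ℂ)/Dp n) - (∑' n : ℕ, ((Gp n:ℝ):ℂ)/Dp n)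
      - ∑' n : ℕ, ((ℓ:ℂ)*((n:ℂ)+(ρ:ℂ)))/Dp n := by
    rw [hP, Summable.tsum_sub (hPc.sub hPg) hPl, Summable.tsum_sub hPc hPg]
  have TN : ∑' n : ℕ, N n = (∑' n : ℕ, (c:ℂ)/Dn n) - (∑' n : ℕ, ((Gn n:ℝ):ℂ)/Dn n)
      + ∑' n : ℕ, ((ℓ:ℂ)*((n:ℂ)+((1-ρ:ℝ):ℂ)))/Dn n := by
    rw [hN, Summable.tsum_add (hNc.sub hNg) hNl, Summable.tsum_sub hNc hNg]
  show ∑' n : ℤ, F n = _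
  rw [hsplit, TP, TN, TPc, TNc, TPl, TNl, TPg, TNg]
  have hmid : (∑ i, (1 / ((α i:ℕ) : ℂ) ^ s) *
          ∑ k ∈ Finset.range (α i),
            ((Int.fract (((γ i : ℝ) - (k : ℝ) * (β i : ℝ)) / ((α i:ℕ) : ℝ)) : ℝ) : ℂ) *
              (hurwitzZetaSeries s (((k : ℝ) + ρ) / ((α i:ℕ) : ℝ)) -
                hurwitzZetaSeries s (1 - ((k : ℝ) + ρ) / ((α i:ℕ) : ℝ))))
      = (∑ i, (1/((α i:ℕ):ℂ)^s) * ∑ k ∈ Finset.range (α i),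
          ((wp i k : ℝ):ℂ) * hurwitzZetaSeries s (((k:ℝ)+ρ)/((α i:ℕ):ℝ)))
        - ∑ i, (1/((α i:ℕ):ℂ)^s) * ∑ k ∈ Finset.range (α i),
          ((wp i k : ℝ):ℂ) * hurwitzZetaSeries s (1 - ((k:ℝ)+ρ)/((α i:ℕ):ℝ)) := by
    have hfr : ∀ (i : Fin m) (k : ℕ),
        Int.fract (((γ i : ℝ) - (k : ℝ) * (β i : ℝ)) / ((α i:ℕ) : ℝ)) = wp i k :=
      fun i k => by rw [hwp]
    simp_rw [hfr]
    rw [← Finset.sum_sub_distrib]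
    refine Finset.sum_congr rfl fun i _ => ?_
    rw [← mul_sub, ← Finset.sum_sub_distrib]
    congr 1
    exact Finset.sum_congr rfl fun k _ => by rw [mul_sub]
  rw [hmid]
  ring
end
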